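/- arXiv:1707.04823 — 2 statements merged into one kernel-verified Lean document; each statement's English description precedes it below -/
import Mathlib

section
/- For all natural numbers a, b, c ≥ 1: 5^(^(a+c) 5 + ^(b+c) 5) ≤ ^(a+b+c+1) 5, where ^n 5 denotes tetration. -/
/-- Tetration tower of 5's: `tow 1 = 5`, `tow (n+1) = 5 ^ tow n`. -/
def tow : ℕ → ℕ
  | 0 => 1
  | n + 1 => 5 ^ tow n

/-! Since `2 t ≤ 5 ^ t`, the sum of two towers lower than `n` is at most `tow n`; raising `5` to
both sides gives the theorem, as `a, b ≥ 1` put `a + c` and `b + c` below `a + b + c`. -/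

lemma tow_strictMono : StrictMono tow :=
  strictMono_nat_of_lt_succ fun n => Nat.lt_pow_self (by norm_num)

lemma tow_add_tow_le {m k n : ℕ} (hm : m < n) (hk : k < n) : tow m + tow k ≤ tow n := by
  obtain ⟨n, rfl⟩ := Nat.exists_eq_add_one_of_ne_zero (Nat.ne_zero_of_lt hm)
  have hm' : tow m ≤ tow n := tow_strictMono.monotone (Nat.le_of_lt_succ hm)
  have hk' : tow k ≤ tow n := tow_strictMono.monotone (Nat.le_of_lt_succ hk)
  calc tow m + tow k ≤ 5 * tow n := by omega
    _ ≤ 5 ^ tow n := Nat.mul_le_pow (by norm_num) _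

theorem pow_tow_add_tow_le_general (a b c : ℕ) (ha : 1 ≤ a) (hb : 1 ≤ b) :
    5 ^ (tow (a + c) + tow (b + c)) ≤ tow (a + b + c + 1) :=
  Nat.pow_le_pow_right (by norm_num) (tow_add_tow_le (by omega) (by omega))

theorem pow_tow_add_tow_le (a b c : ℕ) (ha : 1 ≤ a) (hb : 1 ≤ b) (hc : 1 ≤ c) :
    5 ^ (tow (a + c) + tow (b + c)) ≤ tow (a + b + c + 1) :=
  pow_tow_add_tow_le_general a b c ha hb
end

section
/- For all natural numbers a, b, c ≥ 1: ^(a+c) 5 + ^(b+c) 5 < ^(a+b+c) 5, where ^n 5 denotes tetration. (This justifies that the choice-Distribution step strictly reduces rank.) -/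
/-! Two towers of height below `k` together stay below the tower of height `k`, because one more
exponentiation more than doubles a tower: `2 t < 5 ^ t` by Bernoulli's inequality. -/

lemma two_mul_lt_pow {b : ℕ} (hb : 3 ≤ b) (n : ℕ) : 2 * n < b ^ n := by
  have bernoulli : 1 + n * (b - 1) ≤ (1 + (b - 1)) ^ n :=
    one_add_le_pow_of_two_add_nonneg (by omega) n
  rw [Nat.add_sub_cancel' (by omega)] at bernoulli
  have := Nat.mul_le_mul_left n (show 2 ≤ b - 1 by omega)
  omega

lemma tow_succ (n : ℕ) : tow (n + 1) = 5 ^ tow n := rfl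

lemma two_mul_tow_lt_tow_succ (n : ℕ) : 2 * tow n < tow (n + 1) :=
  (tow_succ n).symm ▸ two_mul_lt_pow (by norm_num) (tow n)

lemma tow_add_tow_lt_of_lt {m n k : ℕ} (hm : m < k) (hn : n < k) : tow m + tow n < tow k :=
  calc tow m + tow n ≤ 2 * tow (max m n) := by
        have := tow_strictMono.monotone (le_max_left m n)
        have := tow_strictMono.monotone (le_max_right m n)
        omega
    _ < tow (max m n + 1) := two_mul_tow_lt_tow_succ _
    _ ≤ tow k := tow_strictMono.monotone (by omega)

theorem tow_add_tow_lt_general (a b c : ℕ) (ha : 1 ≤ a) (hb : 1 ≤ b) :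
    tow (a + c) + tow (b + c) < tow (a + b + c) :=
  tow_add_tow_lt_of_lt (by omega) (by omega)

theorem tow_add_tow_lt (a b c : ℕ) (ha : 1 ≤ a) (hb : 1 ≤ b) (hc : 1 ≤ c) :
    tow (a + c) + tow (b + c) < tow (a + b + c) :=
  tow_add_tow_lt_general a b c ha hb
end
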